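/- arXiv:1203.5751 — 2 statements merged into one kernel-verified Lean document; each statement's English description precedes it below -/
import Mathlib

section
/- With notation as in Section 5, for X ⊆ Y ⊆ Z with |Y| = n, the length of the unique element w_{X,Y} of W_{X,d_Y} equals Σ_{y ∈ Y∖X} |{z ∈ Z∖Y : y < z}|. -/
open Equiv Finset

noncomputable section

/-- Coxeter length of a permutation of `Fin r` = number of inversions. -/
def permLength {r : ℕ} (w : Equiv.Perm (Fin r)) : ℕ :=
  (Finset.univ.filter (fun p : Fin r × Fin r => p.1 < p.2 ∧ w p.2 < w p.1)).card

/-- the simple transpositions `(i, i+1)`. -/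
def IsSimpleTransposition {r : ℕ} (s : Equiv.Perm (Fin r)) : Prop :=
  ∃ (i : ℕ) (h : i + 1 < r), s = Equiv.swap ⟨i, Nat.lt_of_succ_lt h⟩ ⟨i + 1, h⟩

/-- strong Bruhat order: `u ⊴ v` iff `u` is the product of a sublist of a reduced word for `v`. -/
def BruhatLE {r : ℕ} (u v : Equiv.Perm (Fin r)) : Prop :=
  ∃ L : List (Equiv.Perm (Fin r)),
    (∀ s ∈ L, IsSimpleTransposition s) ∧ L.prod = v ∧ L.length = permLength v ∧
      ∃ L' : List (Equiv.Perm (Fin r)), L'.Sublist L ∧ L'.prod = u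

def partialSum (f : ℕ → ℕ) (e : ℕ) : ℕ := ∑ j ∈ Finset.range e, f j

/-- a composition of `r`: a (finitely supported) sequence of non-negative integers summing to `r`. -/
def IsCompositionOf (f : ℕ → ℕ) (r : ℕ) : Prop :=
  (Function.support f).Finite ∧ ∑ᶠ i, f i = r

/-- dominance order on compositions: `DomLE f g` means `f ⊴ g`. -/
def DomLE (f g : ℕ → ℕ) : Prop := ∀ e : ℕ, partialSum f e ≤ partialSum g e

/-- (0-indexed) row of the box `b` in the Young diagram of the composition `f`,
boxes being numbered `0, 1, 2, …` along the rows. -/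
def rowIndex {r : ℕ} (f : ℕ → ℕ) (b : Fin r) : ℕ :=
  sInf {i : ℕ | (b : ℕ) < partialSum f (i + 1)}

/-- the Young (standard parabolic) subgroup `W_f`, as a set of permutations. -/
def YoungSubgroup {r : ℕ} (f : ℕ → ℕ) : Set (Equiv.Perm (Fin r)) :=
  {w | ∀ b : Fin r, rowIndex f (w b) = rowIndex f b}

/-- `W_{f,g}`; positions are acted on on the right, `(b)w = w⁻¹ b`. -/
def Wlm {r : ℕ} (f g : ℕ → ℕ) : Set (Equiv.Perm (Fin r)) :=
  {w | ∀ (i : ℕ) (b : Fin r), i ≤ rowIndex f b → i ≤ rowIndex g (w⁻¹ b)}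

/-- `D_f`: minimal length representatives of the cosets `W_f d`. -/
def minimalCosetReps {r : ℕ} (f : ℕ → ℕ) : Set (Equiv.Perm (Fin r)) :=
  {d | ∀ π ∈ YoungSubgroup (r := r) f, permLength d ≤ permLength (π * d)}

/-- a tableau of shape `f` is encoded by its entry function, a permutation of the boxes;
the tableau `t^f d` corresponds to the entry function `d⁻¹`. -/
def IsRowStandard {r : ℕ} (f : ℕ → ℕ) (t : Equiv.Perm (Fin r)) : Prop :=
  ∀ b₁ b₂ : Fin r, rowIndex f b₁ = rowIndex f b₂ → b₁ < b₂ → t b₁ < t b₂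

/-- generalized tableaux are functions `Fin r → ℕ`; content `g` (0-indexed entries). -/
def HasContent {r : ℕ} (g : ℕ → ℕ) (T : Fin r → ℕ) : Prop :=
  ∀ i : ℕ, (Finset.univ.filter (fun b => T b = i)).card = g i

def IsRowSemistandard {r : ℕ} (f : ℕ → ℕ) (T : Fin r → ℕ) : Prop :=
  ∀ b₁ b₂ : Fin r, rowIndex f b₁ = rowIndex f b₂ → b₁ ≤ b₂ → T b₁ ≤ T b₂

/-- ascending: every entry in row `i` is `≥ i`. -/
def IsAscending {r : ℕ} (f : ℕ → ℕ) (T : Fin r → ℕ) : Prop :=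
  ∀ b : Fin r, rowIndex f b ≤ T b

/-- `T^λ_g`: the boxes filled in the natural order with `g 0` zeroes, `g 1` ones, … -/
def stdTableau {r : ℕ} (g : ℕ → ℕ) : Fin r → ℕ := fun b => rowIndex g b

/-- conjugate (dual) of a partition. -/
def conjFn (l : ℕ → ℕ) : ℕ → ℕ := fun i => Nat.card {k : ℕ | i + 1 ≤ l k}

/-- (row, column) coordinates of box `b` in the diagram of `f`. -/
def boxPlace {r : ℕ} (f : ℕ → ℕ) (b : Fin r) : ℕ × ℕ :=
  (rowIndex f b, (b : ℕ) - partialSum f (rowIndex f b))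

/-- the set `Z` of entries of rows `k` and `k+1` of the tableau (with entry function) `t`. -/
def rowsKK1 {r : ℕ} (l : ℕ → ℕ) (k : ℕ) (t : Equiv.Perm (Fin r)) : Finset (Fin r) :=
  (Finset.univ.filter (fun b => rowIndex l b = k ∨ rowIndex l b = k + 1)).image t

/-- the composition `μ_X` (with `c = |X|`). -/
def muComp (l : ℕ → ℕ) (k c : ℕ) : ℕ → ℕ :=
  fun j => if j = k then l k + l (k + 1) - c else if j = k + 1 then c else l j

/-- the composition `ν_X` (with `c = |X|`). -/
def nuComp (l : ℕ → ℕ) (k c : ℕ) : ℕ → ℕ :=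
  fun j => if j ≤ k then l j
    else if j = k + 1 then l (k + 1) - c
    else if j = k + 2 then c
    else l (j - 1)

/-- `dX` encodes the row-standard `mu`-tableau `t_X = t^{mu} dX` (entry function `dX⁻¹`)
which agrees with `t` outside rows `k, k+1`, has `X` in row `k+1` and `Z \ X` in row `k`. -/
def IsTabX {r : ℕ} (l mu : ℕ → ℕ) (k : ℕ) (t : Equiv.Perm (Fin r)) (X : Finset (Fin r))
    (dX : Equiv.Perm (Fin r)) : Prop :=
  IsRowStandard mu dX⁻¹ ∧
  (∀ b : Fin r, rowIndex mu b ≠ k → rowIndex mu b ≠ k + 1 → dX⁻¹ b = t b) ∧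
  (Finset.univ.filter (fun b => rowIndex mu b = k + 1)).image (fun b => dX⁻¹ b) = X ∧
  (Finset.univ.filter (fun b => rowIndex mu b = k)).image (fun b => dX⁻¹ b) = rowsKK1 l k t \ X

/-- the set `W_{X,d} = W_{μ_X} ∩ (D_{ν_X} ∩ W_λ) d d_X⁻¹`. -/
def WXset {r : ℕ} (mu nu l : ℕ → ℕ) (dX d : Equiv.Perm (Fin r)) : Set (Equiv.Perm (Fin r)) :=
  {w | w ∈ YoungSubgroup (r := r) mu ∧
    ∃ e, e ∈ minimalCosetReps (r := r) nu ∧ e ∈ YoungSubgroup (r := r) l ∧ w = e * d * dX⁻¹}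

section Aux

variable {r : ℕ}

theorem Equiv.Perm.apply_inv_self {α : Type*} (f : Equiv.Perm α) (x : α) : f (f⁻¹ x) = x :=
  f.apply_symm_apply x

theorem Equiv.Perm.inv_apply_self {α : Type*} (f : Equiv.Perm α) (x : α) : f⁻¹ (f x) = x :=
  f.symm_apply_apply x

lemma partialSum_succ (f : ℕ → ℕ) (e : ℕ) : partialSum f (e + 1) = partialSum f e + f e :=
  Finset.sum_range_succ f e

lemma partialSum_mono (f : ℕ → ℕ) : Monotone (partialSum f) := by
  intro a b hab
  exact Finset.sum_le_sum_of_subset (Finset.range_subset_range.mpr hab)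

/-- totality : every box index is eventually exceeded by the partial sums -/
def PTotal (f : ℕ → ℕ) (r : ℕ) : Prop := ∀ b : Fin r, ∃ N, (b : ℕ) < partialSum f N

lemma rowIndex_spec {f : ℕ → ℕ} (Hf : PTotal f r) (b : Fin r) :
    partialSum f (rowIndex f b) ≤ (b : ℕ) ∧ (b : ℕ) < partialSum f (rowIndex f b + 1) := by
  have hne : {i : ℕ | (b : ℕ) < partialSum f (i + 1)}.Nonempty := by
    obtain ⟨N, hN⟩ := Hf b
    rcases N with _ | N
    · simp [partialSum] at hN
    · exact ⟨N, hN⟩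
  constructor
  · rcases h : rowIndex f b with _ | j
    · simp [partialSum]
    · have : j ∉ {i : ℕ | (b : ℕ) < partialSum f (i + 1)} := by
        apply Nat.notMem_of_lt_sInf
        exact lt_of_lt_of_eq (Nat.lt_succ_self j) (id h).symm
      simpa using this
  · exact Nat.sInf_mem hne

lemma rowIndex_eq {f : ℕ → ℕ} (Hf : PTotal f r) {b : Fin r} {i : ℕ}
    (h1 : partialSum f i ≤ (b : ℕ)) (h2 : (b : ℕ) < partialSum f (i + 1)) :
    rowIndex f b = i := by
  obtain ⟨hs1, hs2⟩ := rowIndex_spec Hf b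
  rcases lt_trichotomy (rowIndex f b) i with h | h | h
  · have := partialSum_mono f (show rowIndex f b + 1 ≤ i by omega)
    omega
  · exact h
  · have := partialSum_mono f (show i + 1 ≤ rowIndex f b by omega)
    omega

lemma rowIndex_mono {f : ℕ → ℕ} (Hf : PTotal f r) {b1 b2 : Fin r} (h : b1 ≤ b2) :
    rowIndex f b1 ≤ rowIndex f b2 := by
  have h2 := (rowIndex_spec Hf b2).2
  exact Nat.sInf_le (show (b1:ℕ) < _ from lt_of_le_of_lt h h2)

end Aux
section Aux2

variable {r : ℕ}

lemma invset_swap (e : Equiv.Perm (Fin r)) (b b' : Fin r) (hbb' : (b' : ℕ) = (b : ℕ) + 1)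
    (hlt : e⁻¹ b' < e⁻¹ b) :
    Finset.univ.filter (fun p : Fin r × Fin r =>
        p.1 < p.2 ∧ (Equiv.swap b b' * e) p.2 < (Equiv.swap b b' * e) p.1)
      = (Finset.univ.filter (fun p : Fin r × Fin r => p.1 < p.2 ∧ e p.2 < e p.1)).erase
          (e⁻¹ b', e⁻¹ b) := by
  have hbne : b ≠ b' := by
    intro h; rw [h] at hbb'; omega
  ext ⟨x, y⟩
  simp only [Finset.mem_filter, Finset.mem_erase, Finset.mem_univ, true_and]
  simp only [Equiv.Perm.mul_apply]
  constructor
  · rintro ⟨hxy, hs⟩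
    have hxyne : e x ≠ e y := fun h => absurd (e.injective h) (ne_of_lt hxy)
    refine ⟨?_, hxy, ?_⟩
    · intro hp
      injection hp with h1 h2
      subst h1; subst h2
      rw [Equiv.Perm.apply_inv_self, Equiv.Perm.apply_inv_self, Equiv.swap_apply_left,
        Equiv.swap_apply_right] at hs
      exact absurd hs (by simp [Fin.lt_def, hbb'])
    · -- from swapped inversion to original inversion
      by_cases hx1 : e x = b
      · rw [hx1, Equiv.swap_apply_left] at hs
        by_cases hy2 : e y = b'
        · exfalso
          have hx' : e⁻¹ b = x := by rw [← hx1, Equiv.Perm.inv_apply_self]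
          have hy' : e⁻¹ b' = y := by rw [← hy2, Equiv.Perm.inv_apply_self]
          rw [hx', hy'] at hlt
          exact absurd hxy (not_lt.mpr (le_of_lt hlt))
        · have hy1 : e y ≠ b := by rw [← hx1]; exact hxyne.symm
          rw [Equiv.swap_apply_of_ne_of_ne hy1 hy2] at hs
          have h1 : (e y : ℕ) < (b : ℕ) + 1 := by simpa [Fin.lt_def, hbb'] using hs
          have h2 : (e y : ℕ) ≠ (b : ℕ) := fun h => hy1 (Fin.ext h)
          rw [hx1]; exact Fin.lt_def.mpr (by omega)
      · by_cases hx2 : e x = b'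
        · rw [hx2, Equiv.swap_apply_right] at hs
          by_cases hy1 : e y = b
          · -- e x = b', e y = b : original e y = b < b' = e x
            rw [hx2, hy1]; exact Fin.lt_def.mpr (by omega)
          · have hy2 : e y ≠ b' := by rw [← hx2]; exact hxyne.symm
            rw [Equiv.swap_apply_of_ne_of_ne hy1 hy2] at hs
            have h1 : (e y : ℕ) < (b : ℕ) := Fin.lt_def.mp hs
            rw [hx2]; exact Fin.lt_def.mpr (by omega)
        · rw [Equiv.swap_apply_of_ne_of_ne hx1 hx2] at hs
          by_cases hy1 : e y = b
          · rw [hy1, Equiv.swap_apply_left] at hs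
            have h1 : (b : ℕ) + 1 < (e x : ℕ) := by simpa [Fin.lt_def, hbb'] using hs
            rw [hy1]; exact Fin.lt_def.mpr (by omega)
          · by_cases hy2 : e y = b'
            · rw [hy2, Equiv.swap_apply_right] at hs
              have h1 : (b : ℕ) < (e x : ℕ) := Fin.lt_def.mp hs
              have h2 : (e x : ℕ) ≠ (b : ℕ) := fun h => hx1 (Fin.ext h)
              rw [hy2]; exact Fin.lt_def.mpr (by omega)
            · rwa [Equiv.swap_apply_of_ne_of_ne hy1 hy2] at hs
  · rintro ⟨hne, hxy, hs⟩
    refine ⟨hxy, ?_⟩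
    have hxyne : e x ≠ e y := fun h => absurd (e.injective h) (ne_of_lt hxy)
    by_cases hx1 : e x = b
    · -- then e y < b, and y ≠ b', so swap e y = e y (unless e y = b')
      rw [hx1, Equiv.swap_apply_left]
      have hy1 : e y ≠ b := by rw [← hx1]; exact hxyne.symm
      by_cases hy2 : e y = b'
      · exfalso
        have hx' : e⁻¹ b = x := by rw [← hx1, Equiv.Perm.inv_apply_self]
        have hy' : e⁻¹ b' = y := by rw [← hy2, Equiv.Perm.inv_apply_self]
        rw [hx', hy'] at hlt
        exact absurd hxy (not_lt.mpr (le_of_lt hlt))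
      · rw [Equiv.swap_apply_of_ne_of_ne hy1 hy2]
        have := Fin.lt_def.mp hs
        rw [hx1] at this
        exact Fin.lt_def.mpr (by omega)
    · by_cases hx2 : e x = b'
      · rw [hx2, Equiv.swap_apply_right]
        by_cases hy1 : e y = b
        · -- would be the erased pair
          exfalso
          have hx' : e⁻¹ b' = x := by rw [← hx2, Equiv.Perm.inv_apply_self]
          have hy' : e⁻¹ b = y := by rw [← hy1, Equiv.Perm.inv_apply_self]
          exact hne (by rw [← hx', ← hy'])
        · have hy2 : e y ≠ b' := by rw [← hx2]; exact hxyne.symm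
          rw [Equiv.swap_apply_of_ne_of_ne hy1 hy2]
          have := Fin.lt_def.mp hs
          rw [hx2] at this
          have h2 : (e y : ℕ) ≠ (b : ℕ) := fun h => hy1 (Fin.ext h)
          exact Fin.lt_def.mpr (by omega)
      · rw [Equiv.swap_apply_of_ne_of_ne hx1 hx2]
        by_cases hy1 : e y = b
        · rw [hy1, Equiv.swap_apply_left]
          have := Fin.lt_def.mp hs
          rw [hy1] at this
          have h2 : (e x : ℕ) ≠ (b : ℕ) + 1 := by
            rw [← hbb']; exact fun h => hx2 (Fin.ext h)
          exact Fin.lt_def.mpr (by omega)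
        · by_cases hy2 : e y = b'
          · rw [hy2, Equiv.swap_apply_right]
            have := Fin.lt_def.mp hs
            rw [hy2, hbb'] at this
            exact Fin.lt_def.mpr (by omega)
          · rwa [Equiv.swap_apply_of_ne_of_ne hy1 hy2]

lemma swap_mem_young (f : ℕ → ℕ) (b b' : Fin r) (h : rowIndex f b = rowIndex f b') :
    Equiv.swap b b' ∈ YoungSubgroup (r := r) f := by
  intro x
  rcases eq_or_ne x b with rfl | hx1
  · rw [Equiv.swap_apply_left]; exact h.symm
  rcases eq_or_ne x b' with rfl | hx2
  · rw [Equiv.swap_apply_right]; exact h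
  · rw [Equiv.swap_apply_of_ne_of_ne hx1 hx2]

lemma dmin_inv_adj {f : ℕ → ℕ} {e : Equiv.Perm (Fin r)} (he : e ∈ minimalCosetReps (r := r) f)
    {b b' : Fin r} (hbb' : (b' : ℕ) = (b : ℕ) + 1) (hrow : rowIndex f b = rowIndex f b') :
    e⁻¹ b < e⁻¹ b' := by
  by_contra h
  have hne : e⁻¹ b ≠ e⁻¹ b' := by
    intro hh
    have : b = b' := e⁻¹.injective hh
    rw [this] at hbb'; omega
  have hlt : e⁻¹ b' < e⁻¹ b := lt_of_le_of_ne (not_lt.mp h) hne.symm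
  have hkey := invset_swap e b b' hbb' hlt
  have hmem : ((e⁻¹ b', e⁻¹ b) : Fin r × Fin r) ∈
      Finset.univ.filter (fun p : Fin r × Fin r => p.1 < p.2 ∧ e p.2 < e p.1) := by
    simp only [Finset.mem_filter, Finset.mem_univ, true_and]
    refine ⟨hlt, ?_⟩
    rw [Equiv.Perm.apply_inv_self, Equiv.Perm.apply_inv_self]
    exact Fin.lt_def.mpr (by omega)
  have hmin := he (Equiv.swap b b') (swap_mem_young f b b' hrow)
  have hcard : permLength (Equiv.swap b b' * e) = permLength e - 1 := by
    unfold permLength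
    rw [hkey, Finset.card_erase_of_mem hmem]
  have hpos : 1 ≤ permLength e := Finset.card_pos.mpr ⟨_, hmem⟩
  omega

lemma dmin_inv_mono {f : ℕ → ℕ} (Hf : PTotal f r) {e : Equiv.Perm (Fin r)}
    (he : e ∈ minimalCosetReps (r := r) f) :
    ∀ {b1 b2 : Fin r}, rowIndex f b1 = rowIndex f b2 → b1 < b2 → e⁻¹ b1 < e⁻¹ b2 := by
  suffices H : ∀ gap : ℕ, ∀ b1 b2 : Fin r, (b2 : ℕ) = (b1 : ℕ) + gap + 1 →
      rowIndex f b1 = rowIndex f b2 → e⁻¹ b1 < e⁻¹ b2 by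
    intro b1 b2 hrow hlt
    have := Fin.lt_def.mp hlt
    exact H ((b2 : ℕ) - (b1 : ℕ) - 1) b1 b2 (by omega) hrow
  intro gap
  induction gap with
  | zero => intro b1 b2 h hrow; exact dmin_inv_adj he (by omega) hrow
  | succ g ih =>
    intro b1 b2 h hrow
    have hm : (b1 : ℕ) + 1 < r := by have := b2.isLt; omega
    set bm : Fin r := ⟨(b1 : ℕ) + 1, hm⟩ with hbm
    have h1 : rowIndex f b1 ≤ rowIndex f bm := rowIndex_mono Hf (by simp [hbm, Fin.le_def])
    have h2 : rowIndex f bm ≤ rowIndex f b2 := rowIndex_mono Hf (by simp [hbm, Fin.le_def]; omega)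
    have hrow1 : rowIndex f b1 = rowIndex f bm := by omega
    have hrow2 : rowIndex f bm = rowIndex f b2 := by omega
    exact lt_trans (dmin_inv_adj he (by simp [hbm]) hrow1) (ih bm b2 (by simp [hbm]; omega) hrow2)

lemma rowStandard_lt_iff {f : ℕ → ℕ} {d : Equiv.Perm (Fin r)} (hd : IsRowStandard f d)
    {b1 b2 : Fin r} (hrow : rowIndex f b1 = rowIndex f b2) :
    b1 < b2 ↔ d b1 < d b2 := by
  constructor
  · exact hd b1 b2 hrow
  · intro h
    rcases lt_trichotomy b1 b2 with hh | hh | hh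
    · exact hh
    · rw [hh] at h; exact absurd h (lt_irrefl _)
    · exact absurd (hd b2 b1 hrow.symm hh) (not_lt.mpr (le_of_lt h))

end Aux2
theorem statement18 (r : ℕ) (l : ℕ → ℕ) (hl : IsCompositionOf l r) (k : ℕ)
    (t : Equiv.Perm (Fin r)) (ht : IsRowStandard l t)
    (X : Finset (Fin r)) (hXZ : X ⊆ rowsKK1 l k t) (hXcard : X.card ≤ l (k + 1))
    (dX : Equiv.Perm (Fin r)) (hdX : IsTabX l (muComp l k X.card) k t X dX)
    (Y : Finset (Fin r)) (hXY : X ⊆ Y) (hYZ : Y ⊆ rowsKK1 l k t)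
    (hYcard : Y.card = l (k + 1))
    (dYe : Equiv.Perm (Fin r)) (hdY : IsTabX l l k t Y dYe)
    (w : Equiv.Perm (Fin r))
    (hw : w ∈ WXset (muComp l k X.card) (nuComp l k X.card) l dX dYe) :
    permLength w = ∑ y ∈ Y \ X, ((rowsKK1 l k t \ Y).filter (fun z => y < z)).card := by
  classical
  obtain ⟨hsupp, hsum⟩ := hl
  obtain ⟨hwmu, e, heD, hel, hwe⟩ := hw
  obtain ⟨hXrs, hXout, hXim1, hXim0⟩ := hdX
  obtain ⟨hYrs, hYout, hYim1, hYim0⟩ := hdY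
  have hC : X.card ≤ l (k + 1) := hXcard
  set mu := muComp l k X.card with hmu
  set nu := nuComp l k X.card with hnu
  -- values of mu and nu
  have hmuk : mu k = l k + l (k + 1) - X.card := by rw [hmu]; simp [muComp]
  have hmuk1 : mu (k + 1) = X.card := by rw [hmu]; simp [muComp]
  have hmuother : ∀ j, j ≠ k → j ≠ k + 1 → mu j = l j := by
    intro j h1 h2; rw [hmu]; simp [muComp, h1, h2]
  have hnule : ∀ j, j ≤ k → nu j = l j := by
    intro j hj; rw [hnu]; simp [nuComp, hj]
  have hnuk1 : nu (k + 1) = l (k + 1) - X.card := by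
    rw [hnu]; simp [nuComp]
  have hnuk2 : nu (k + 2) = X.card := by
    rw [hnu]; simp [nuComp]
  have hnuge : ∀ j, k + 3 ≤ j → nu j = l (j - 1) := by
    intro j hj; rw [hnu]
    simp only [nuComp]
    rw [if_neg (by omega), if_neg (by omega), if_neg (by omega)]
  -- totality
  have hlfull : ∀ Mm, hsupp.toFinset.sup id + 1 ≤ Mm → partialSum l Mm = r := by
    intro Mm hMm
    rw [← hsum, finsum_eq_sum l hsupp]
    refine (Finset.sum_subset ?_ ?_).symm
    · intro i hi
      rw [Finset.mem_range]
      have : i ≤ hsupp.toFinset.sup id := Finset.le_sup (f := id) hi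
      omega
    · intro i _ hi
      by_contra hne
      exact hi (hsupp.mem_toFinset.mpr hne)
  have Htl : PTotal l r := fun b =>
    ⟨hsupp.toFinset.sup id + 1, by rw [hlfull _ le_rfl]; exact b.isLt⟩
  -- partial sums of l
  have hpsl1 : partialSum l (k + 1) = partialSum l k + l k := partialSum_succ l k
  have hpsl2 : partialSum l (k + 2) = partialSum l k + l k + l (k + 1) := by
    rw [partialSum_succ, hpsl1]
  -- partial sums of mu
  have psmu_le : ∀ j, j ≤ k → partialSum mu j = partialSum l j := by
    intro j hj
    refine Finset.sum_congr rfl fun x hx => ?_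
    rw [Finset.mem_range] at hx
    exact hmuother x (by omega) (by omega)
  have hpsmuk : partialSum mu k = partialSum l k := psmu_le k le_rfl
  have hpsmu1 : partialSum mu (k + 1) = partialSum l k + (l k + l (k + 1) - X.card) := by
    rw [partialSum_succ, hpsmuk, hmuk]
  have hpsmu2 : partialSum mu (k + 2) = partialSum l k + l k + l (k + 1) := by
    rw [partialSum_succ, hpsmu1, hmuk1]; omega
  have psmu_ge : ∀ j, k + 2 ≤ j → partialSum mu j = partialSum l j := by
    intro j hj
    induction j with
    | zero => omega
    | succ i ih =>
      rcases Nat.lt_or_ge i (k + 2) with h | h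
      · have hik : i + 1 = k + 2 := by omega
        rw [hik, hpsmu2, hpsl2]
      · rw [partialSum_succ, partialSum_succ, ih (by omega), hmuother i (by omega) (by omega)]
  have Htmu : PTotal mu r := fun b => by
    refine ⟨max (hsupp.toFinset.sup id + 1) (k + 2), ?_⟩
    rw [psmu_ge _ (le_max_right _ _), hlfull _ (le_max_left _ _)]
    exact b.isLt
  -- partial sums of nu
  have psnu_le : ∀ j, j ≤ k + 1 → partialSum nu j = partialSum l j := by
    intro j hj
    refine Finset.sum_congr rfl fun x hx => ?_
    rw [Finset.mem_range] at hx
    exact hnule x (by omega)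
  have hpsnuk : partialSum nu k = partialSum l k := psnu_le k (by omega)
  have hpsnu1 : partialSum nu (k + 1) = partialSum l k + l k := by
    rw [psnu_le (k + 1) le_rfl, hpsl1]
  have hpsnu2 : partialSum nu (k + 2) = partialSum l k + l k + (l (k + 1) - X.card) := by
    rw [partialSum_succ, hpsnu1, hnuk1]
  have hpsnu3 : partialSum nu (k + 3) = partialSum l k + l k + l (k + 1) := by
    rw [partialSum_succ, hpsnu2, hnuk2]; omega
  have psnu_ge : ∀ j, k + 3 ≤ j → partialSum nu j = partialSum l (j - 1) := by
    intro j hj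
    induction j with
    | zero => omega
    | succ i ih =>
      rcases Nat.lt_or_ge i (k + 3) with h | h
      · have hik : i + 1 = k + 3 := by omega
        rw [hik, hpsnu3]
        have : k + 3 - 1 = k + 2 := by omega
        rw [this, hpsl2]
      · rw [partialSum_succ, ih (by omega), hnuge i (by omega)]
        have h1 : i - 1 + 1 = i := by omega
        have h2 : partialSum l (i - 1 + 1) = partialSum l (i - 1) + l (i - 1) :=
          partialSum_succ l (i - 1)
        rw [h1] at h2
        have h3 : i + 1 - 1 = i := by omega
        rw [h3, h2]
  have Htnu : PTotal nu r := fun b => by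
    refine ⟨max (hsupp.toFinset.sup id + 2) (k + 3), ?_⟩
    rw [psnu_ge _ (le_max_right _ _), hlfull _ ?_]
    · exact b.isLt
    · have := le_max_left (hsupp.toFinset.sup id + 2) (k + 3)
      omega
  -- interval characterizations
  have Rl_k : ∀ b : Fin r, rowIndex l b = k ↔
      partialSum l k ≤ (b : ℕ) ∧ (b : ℕ) < partialSum l k + l k := by
    intro b
    constructor
    · intro h
      have hs := rowIndex_spec Htl b
      rw [h, hpsl1] at hs
      omega
    · rintro ⟨h1, h2⟩
      exact rowIndex_eq Htl h1 (by rw [hpsl1]; omega)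
  have Rl_k1 : ∀ b : Fin r, rowIndex l b = k + 1 ↔
      partialSum l k + l k ≤ (b : ℕ) ∧ (b : ℕ) < partialSum l k + l k + l (k + 1) := by
    intro b
    constructor
    · intro h
      have hs := rowIndex_spec Htl b
      rw [h, hpsl2, hpsl1] at hs
      omega
    · rintro ⟨h1, h2⟩
      exact rowIndex_eq Htl (by rw [hpsl1]; omega) (by rw [hpsl2]; omega)
  have Rmu_k : ∀ b : Fin r, rowIndex mu b = k ↔
      partialSum l k ≤ (b : ℕ) ∧ (b : ℕ) < partialSum l k + (l k + l (k + 1) - X.card) := by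
    intro b
    constructor
    · intro h
      have hs := rowIndex_spec Htmu b
      rw [h, hpsmu1, hpsmuk] at hs
      omega
    · rintro ⟨h1, h2⟩
      exact rowIndex_eq Htmu (by rw [hpsmuk]; omega) (by rw [hpsmu1]; omega)
  have Rmu_k1 : ∀ b : Fin r, rowIndex mu b = k + 1 ↔
      partialSum l k + (l k + l (k + 1) - X.card) ≤ (b : ℕ) ∧
        (b : ℕ) < partialSum l k + l k + l (k + 1) := by
    intro b
    constructor
    · intro h
      have hs := rowIndex_spec Htmu b
      rw [h, hpsmu1, hpsmu2] at hs
      omega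
    · rintro ⟨h1, h2⟩
      exact rowIndex_eq Htmu (by rw [hpsmu1]; omega) (by rw [hpsmu2]; omega)
  have Rnu_k : ∀ b : Fin r, rowIndex nu b = k ↔
      partialSum l k ≤ (b : ℕ) ∧ (b : ℕ) < partialSum l k + l k := by
    intro b
    constructor
    · intro h
      have hs := rowIndex_spec Htnu b
      rw [h, hpsnu1, hpsnuk] at hs
      omega
    · rintro ⟨h1, h2⟩
      exact rowIndex_eq Htnu (by rw [hpsnuk]; omega) (by rw [hpsnu1]; omega)
  have Rnu_k1 : ∀ b : Fin r, rowIndex nu b = k + 1 ↔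
      partialSum l k + l k ≤ (b : ℕ) ∧
        (b : ℕ) < partialSum l k + l k + (l (k + 1) - X.card) := by
    intro b
    constructor
    · intro h
      have hs := rowIndex_spec Htnu b
      rw [h, hpsnu1, hpsnu2] at hs
      omega
    · rintro ⟨h1, h2⟩
      exact rowIndex_eq Htnu (by rw [hpsnu1]; omega) (by rw [hpsnu2]; omega)
  have Rnu_k2 : ∀ b : Fin r, rowIndex nu b = k + 2 ↔
      partialSum l k + l k + (l (k + 1) - X.card) ≤ (b : ℕ) ∧
        (b : ℕ) < partialSum l k + l k + l (k + 1) := by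
    intro b
    constructor
    · intro h
      have hs := rowIndex_spec Htnu b
      rw [h, hpsnu2, hpsnu3] at hs
      omega
    · rintro ⟨h1, h2⟩
      exact rowIndex_eq Htnu (by rw [hpsnu2]; omega) (by rw [hpsnu3]; omega)
  -- off-interval facts
  have Roff_lo : ∀ b : Fin r, (b : ℕ) < partialSum l k →
      rowIndex l b < k ∧ rowIndex mu b = rowIndex l b ∧ rowIndex nu b = rowIndex l b := by
    intro b hb
    have hs := rowIndex_spec Htl b
    have hjk : rowIndex l b < k := by
      by_contra hcon
      have := partialSum_mono l (not_lt.mp hcon)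
      omega
    refine ⟨hjk, ?_, ?_⟩
    · exact rowIndex_eq Htmu (by rw [psmu_le _ (by omega)]; exact hs.1)
        (by rw [psmu_le _ (by omega)]; exact hs.2)
    · exact rowIndex_eq Htnu (by rw [psnu_le _ (by omega)]; exact hs.1)
        (by rw [psnu_le _ (by omega)]; exact hs.2)
  have Roff_hi : ∀ b : Fin r, partialSum l k + l k + l (k + 1) ≤ (b : ℕ) →
      k + 2 ≤ rowIndex l b ∧ rowIndex mu b = rowIndex l b ∧
        rowIndex nu b = rowIndex l b + 1 := by
    intro b hb
    have hs := rowIndex_spec Htl b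
    have hjk : k + 2 ≤ rowIndex l b := by
      by_contra hcon
      have h2 : rowIndex l b + 1 ≤ k + 2 := by omega
      have := partialSum_mono l h2
      rw [hpsl2] at this
      omega
    refine ⟨hjk, ?_, ?_⟩
    · exact rowIndex_eq Htmu (by rw [psmu_ge _ (by omega)]; exact hs.1)
        (by rw [psmu_ge _ (by omega)]; exact hs.2)
    · refine rowIndex_eq Htnu ?_ ?_
      · rw [psnu_ge _ (by omega)]
        have hh : rowIndex l b + 1 - 1 = rowIndex l b := by omega
        rw [hh]; exact hs.1
      · rw [psnu_ge _ (by omega)]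
        have hh : rowIndex l b + 1 + 1 - 1 = rowIndex l b + 1 := by omega
        rw [hh]; exact hs.2
  -- tableau entry facts
  have HX1 : ∀ b : Fin r, rowIndex mu b = k + 1 → dX⁻¹ b ∈ X := by
    intro b hb
    rw [← hXim1]
    exact Finset.mem_image_of_mem _ (Finset.mem_filter.mpr ⟨Finset.mem_univ _, hb⟩)
  have HX2 : ∀ b : Fin r, rowIndex mu b = k → dX⁻¹ b ∈ rowsKK1 l k t \ X := by
    intro b hb
    rw [← hXim0]
    exact Finset.mem_image_of_mem _ (Finset.mem_filter.mpr ⟨Finset.mem_univ _, hb⟩)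
  have HX4 : ∀ z : Fin r, z ∈ rowsKK1 l k t \ X → rowIndex mu (dX z) = k := by
    intro z hz
    rw [← hXim0] at hz
    obtain ⟨b, hb, hbe⟩ := Finset.mem_image.mp hz
    have hzb : dX z = b := by rw [← hbe, Equiv.Perm.apply_inv_self]
    rw [hzb]
    exact (Finset.mem_filter.mp hb).2
  have HX5 : ∀ z : Fin r, z ∈ X → rowIndex mu (dX z) = k + 1 := by
    intro z hz
    rw [← hXim1] at hz
    obtain ⟨b, hb, hbe⟩ := Finset.mem_image.mp hz
    have hzb : dX z = b := by rw [← hbe, Equiv.Perm.apply_inv_self]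
    rw [hzb]
    exact (Finset.mem_filter.mp hb).2
  have HY4 : ∀ z : Fin r, z ∈ rowsKK1 l k t \ Y → rowIndex l (dYe z) = k := by
    intro z hz
    rw [← hYim0] at hz
    obtain ⟨b, hb, hbe⟩ := Finset.mem_image.mp hz
    have hzb : dYe z = b := by rw [← hbe, Equiv.Perm.apply_inv_self]
    rw [hzb]
    exact (Finset.mem_filter.mp hb).2
  have HY5 : ∀ z : Fin r, z ∈ Y → rowIndex l (dYe z) = k + 1 := by
    intro z hz
    rw [← hYim1] at hz
    obtain ⟨b, hb, hbe⟩ := Finset.mem_image.mp hz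
    have hzb : dYe z = b := by rw [← hbe, Equiv.Perm.apply_inv_self]
    rw [hzb]
    exact (Finset.mem_filter.mp hb).2
  -- w formulas
  have hwapp : ∀ b : Fin r, w b = e (dYe (dX⁻¹ b)) := by
    intro b
    rw [hwe]
    rfl
  have heinv : ∀ b : Fin r, e⁻¹ (w b) = dYe (dX⁻¹ b) := by
    intro b
    rw [hwapp, Equiv.Perm.inv_apply_self]
  -- class lemmas
  have CK : ∀ b : Fin r, dX⁻¹ b ∈ rowsKK1 l k t \ Y →
      partialSum l k ≤ (w b : ℕ) ∧ (w b : ℕ) < partialSum l k + l k := by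
    intro b hz
    have h1 := HY4 _ hz
    have h2 : rowIndex l (w b) = k := by rw [hwapp, hel]; exact h1
    exact (Rl_k _).mp h2
  have CP : ∀ b : Fin r, dX⁻¹ b ∈ Y \ X →
      partialSum l k + l k ≤ (w b : ℕ) ∧
        (w b : ℕ) < partialSum l k + l k + (l (k + 1) - X.card) := by
    intro b hz
    obtain ⟨hzY, hzX⟩ := Finset.mem_sdiff.mp hz
    have h1 := HY5 _ hzY
    have h2 : rowIndex l (w b) = k + 1 := by rw [hwapp, hel]; exact h1
    have h3 := (Rl_k1 _).mp h2
    have h4 : rowIndex mu b = k := by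
      have := HX4 (dX⁻¹ b) (Finset.mem_sdiff.mpr ⟨hYZ hzY, hzX⟩)
      rwa [Equiv.Perm.apply_inv_self] at this
    have h5 : rowIndex mu (w b) = k := by rw [hwmu]; exact h4
    have h6 := (Rmu_k _).mp h5
    omega
  have CQ : ∀ b : Fin r, dX⁻¹ b ∈ X →
      partialSum l k + l k + (l (k + 1) - X.card) ≤ (w b : ℕ) ∧
        (w b : ℕ) < partialSum l k + l k + l (k + 1) := by
    intro b hz
    have h4 : rowIndex mu b = k + 1 := by
      have := HX5 (dX⁻¹ b) hz
      rwa [Equiv.Perm.apply_inv_self] at this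
    have h5 : rowIndex mu (w b) = k + 1 := by rw [hwmu]; exact h4
    have h6 := (Rmu_k1 _).mp h5
    omega
  have CI : ∀ b : Fin r, (rowIndex mu b = k ∨ rowIndex mu b = k + 1) →
      partialSum l k ≤ (w b : ℕ) ∧ (w b : ℕ) < partialSum l k + l k + l (k + 1) := by
    intro b hb
    rcases hb with hb | hb
    · have hz := HX2 b hb
      by_cases hzY : dX⁻¹ b ∈ Y
      · have := CP b (Finset.mem_sdiff.mpr ⟨hzY, (Finset.mem_sdiff.mp hz).2⟩)
        omega
      · have := CK b (Finset.mem_sdiff.mpr ⟨(Finset.mem_sdiff.mp hz).1, hzY⟩)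
        omega
    · have := CQ b (HX1 b hb)
      omega
  have Coff : ∀ b : Fin r, ¬rowIndex mu b = k → ¬rowIndex mu b = k + 1 →
      w b = e b ∧ rowIndex l (w b) = rowIndex l b := by
    intro b h1 h2
    have hl1 : rowIndex l b ≠ k := by
      intro hh
      have := (Rl_k b).mp hh
      exact h1 ((Rmu_k b).mpr ⟨this.1, by omega⟩)
    have hl2 : rowIndex l b ≠ k + 1 := by
      intro hh
      have hb := (Rl_k1 b).mp hh
      by_cases hsplit : (b : ℕ) < partialSum l k + (l k + l (k + 1) - X.card)
      · exact h1 ((Rmu_k b).mpr ⟨by omega, hsplit⟩)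
      · exact h2 ((Rmu_k1 b).mpr ⟨by omega, by omega⟩)
    have he1 : dX⁻¹ b = t b := hXout b h1 h2
    have he2 : dYe⁻¹ b = t b := hYout b hl1 hl2
    have he3 : dYe (t b) = b := by rw [← he2, Equiv.Perm.apply_inv_self]
    constructor
    · rw [hwapp, he1, he3]
    · rw [hwapp, he1, he3, hel]
  -- e monotone on nu-rows
  have EM : ∀ b1 b2 : Fin r, rowIndex nu b1 = rowIndex nu b2 → b1 < b2 → e⁻¹ b1 < e⁻¹ b2 :=
    fun b1 b2 h1 h2 => dmin_inv_mono Htnu heD h1 h2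
  -- row-standard iffs
  have RSX : ∀ b1 b2 : Fin r, rowIndex mu b1 = rowIndex mu b2 →
      (b1 < b2 ↔ dX⁻¹ b1 < dX⁻¹ b2) := fun b1 b2 h => rowStandard_lt_iff hXrs h
  have RSY : ∀ z1 z2 : Fin r, rowIndex l (dYe z1) = rowIndex l (dYe z2) →
      (dYe z1 < dYe z2 ↔ z1 < z2) := by
    intro z1 z2 h
    have := rowStandard_lt_iff hYrs h
    rwa [Equiv.Perm.inv_apply_self, Equiv.Perm.inv_apply_self] at this
  -- the inversion characterization
  have Hchar : ∀ b1 b2 : Fin r, (b1 < b2 ∧ w b2 < w b1) ↔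
      (dX⁻¹ b1 ∈ Y \ X ∧ dX⁻¹ b2 ∈ rowsKK1 l k t \ Y ∧ dX⁻¹ b1 < dX⁻¹ b2) := by
    intro b1 b2
    constructor
    · rintro ⟨hb, hwb⟩
      have hbn : (b1 : ℕ) < (b2 : ℕ) := hb
      have hwbn : (w b2 : ℕ) < (w b1 : ℕ) := hwb
      by_cases h1 : rowIndex mu b1 = k ∨ rowIndex mu b1 = k + 1
      · by_cases h2 : rowIndex mu b2 = k ∨ rowIndex mu b2 = k + 1
        · -- both in the middle region
          by_cases hz1X : dX⁻¹ b1 ∈ X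
          · -- then b2 also in row k+1, contradiction via nu-row k+2
            exfalso
            have hr1 : rowIndex mu b1 = k + 1 := by
              have := HX5 _ hz1X; rwa [Equiv.Perm.apply_inv_self] at this
            have hb1b := (Rmu_k1 b1).mp hr1
            have hr2 : rowIndex mu b2 = k + 1 := by
              rcases h2 with h2 | h2
              · exfalso
                have := (Rmu_k b2).mp h2
                omega
              · exact h2
            have hz2X : dX⁻¹ b2 ∈ X := HX1 _ hr2
            have hq1 := CQ b1 hz1X
            have hq2 := CQ b2 hz2X
            have hnur : rowIndex nu (w b2) = rowIndex nu (w b1) := by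
              rw [(Rnu_k2 (w b2)).mpr ⟨by omega, by omega⟩,
                (Rnu_k2 (w b1)).mpr ⟨by omega, by omega⟩]
            have hem := EM _ _ hnur hwb
            rw [heinv, heinv] at hem
            have hrows : rowIndex l (dYe (dX⁻¹ b2)) = rowIndex l (dYe (dX⁻¹ b1)) := by
              rw [HY5 _ (hXY hz2X), HY5 _ (hXY hz1X)]
            have hz21 : dX⁻¹ b2 < dX⁻¹ b1 := (RSY _ _ hrows).mp hem
            have hz12 : dX⁻¹ b1 < dX⁻¹ b2 := (RSX b1 b2 (hr1.trans hr2.symm)).mp hb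
            exact absurd hz12 (not_lt.mpr (le_of_lt hz21))
          · have hr1 : rowIndex mu b1 = k := by
              rcases h1 with h1 | h1
              · exact h1
              · exact absurd (HX1 _ h1) hz1X
            have hz1Z : dX⁻¹ b1 ∈ rowsKK1 l k t \ X := HX2 _ hr1
            by_cases hz2X : dX⁻¹ b2 ∈ X
            · -- w b2 in top block, w b1 below: no inversion
              exfalso
              have hq2 := CQ b2 hz2X
              have hup : (w b1 : ℕ) < partialSum l k + l k + (l (k + 1) - X.card) := by
                by_cases hz1Y : dX⁻¹ b1 ∈ Y
                · exact (CP b1 (Finset.mem_sdiff.mpr ⟨hz1Y, hz1X⟩)).2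
                · have := CK b1 (Finset.mem_sdiff.mpr ⟨(Finset.mem_sdiff.mp hz1Z).1, hz1Y⟩)
                  omega
              omega
            · have hr2 : rowIndex mu b2 = k := by
                rcases h2 with h2 | h2
                · exact h2
                · exact absurd (HX1 _ h2) hz2X
              have hz2Z : dX⁻¹ b2 ∈ rowsKK1 l k t \ X := HX2 _ hr2
              have hz12 : dX⁻¹ b1 < dX⁻¹ b2 := (RSX b1 b2 (hr1.trans hr2.symm)).mp hb
              by_cases hz1Y : dX⁻¹ b1 ∈ Y
              · by_cases hz2Y : dX⁻¹ b2 ∈ Y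
                · -- both in Y \ X : contradiction via nu-row k+1
                  exfalso
                  have hp1 := CP b1 (Finset.mem_sdiff.mpr ⟨hz1Y, hz1X⟩)
                  have hp2 := CP b2 (Finset.mem_sdiff.mpr ⟨hz2Y, hz2X⟩)
                  have hnur : rowIndex nu (w b2) = rowIndex nu (w b1) := by
                    rw [(Rnu_k1 (w b2)).mpr ⟨by omega, by omega⟩,
                      (Rnu_k1 (w b1)).mpr ⟨by omega, by omega⟩]
                  have hem := EM _ _ hnur hwb
                  rw [heinv, heinv] at hem
                  have hrows : rowIndex l (dYe (dX⁻¹ b2)) = rowIndex l (dYe (dX⁻¹ b1)) := by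
                    rw [HY5 _ hz2Y, HY5 _ hz1Y]
                  have hz21 : dX⁻¹ b2 < dX⁻¹ b1 := (RSY _ _ hrows).mp hem
                  exact absurd hz12 (not_lt.mpr (le_of_lt hz21))
                · exact ⟨Finset.mem_sdiff.mpr ⟨hz1Y, hz1X⟩,
                    Finset.mem_sdiff.mpr ⟨(Finset.mem_sdiff.mp hz2Z).1, hz2Y⟩, hz12⟩
              · by_cases hz2Y : dX⁻¹ b2 ∈ Y
                · -- w b1 low, w b2 middle: no inversion
                  exfalso
                  have hk1 := CK b1 (Finset.mem_sdiff.mpr ⟨(Finset.mem_sdiff.mp hz1Z).1, hz1Y⟩)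
                  have hp2 := CP b2 (Finset.mem_sdiff.mpr ⟨hz2Y, hz2X⟩)
                  omega
                · -- both in Z \ Y : contradiction via nu-row k
                  exfalso
                  have hk1 := CK b1 (Finset.mem_sdiff.mpr ⟨(Finset.mem_sdiff.mp hz1Z).1, hz1Y⟩)
                  have hk2 := CK b2 (Finset.mem_sdiff.mpr ⟨(Finset.mem_sdiff.mp hz2Z).1, hz2Y⟩)
                  have hnur : rowIndex nu (w b2) = rowIndex nu (w b1) := by
                    rw [(Rnu_k (w b2)).mpr ⟨by omega, by omega⟩,
                      (Rnu_k (w b1)).mpr ⟨by omega, by omega⟩]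
                  have hem := EM _ _ hnur hwb
                  rw [heinv, heinv] at hem
                  have hrows : rowIndex l (dYe (dX⁻¹ b2)) = rowIndex l (dYe (dX⁻¹ b1)) := by
                    rw [HY4 _ (Finset.mem_sdiff.mpr ⟨(Finset.mem_sdiff.mp hz2Z).1, hz2Y⟩),
                      HY4 _ (Finset.mem_sdiff.mpr ⟨(Finset.mem_sdiff.mp hz1Z).1, hz1Y⟩)]
                  have hz21 : dX⁻¹ b2 < dX⁻¹ b1 := (RSY _ _ hrows).mp hem
                  exact absurd hz12 (not_lt.mpr (le_of_lt hz21))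
        · -- b2 outside the middle region, b1 inside : impossible
          exfalso
          push_neg at h2
          have hside2 : (b2 : ℕ) < partialSum l k ∨
              partialSum l k + l k + l (k + 1) ≤ (b2 : ℕ) := by
            by_contra hcon
            push_neg at hcon
            by_cases hsplit : (b2 : ℕ) < partialSum l k + (l k + l (k + 1) - X.card)
            · exact h2.1 ((Rmu_k b2).mpr ⟨by omega, hsplit⟩)
            · exact h2.2 ((Rmu_k1 b2).mpr ⟨by omega, by omega⟩)
          have hb1I := CI b1 h1
          have hb1lo : partialSum l k ≤ (b1 : ℕ) := by
            rcases h1 with h1 | h1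
            · exact ((Rmu_k b1).mp h1).1
            · have := (Rmu_k1 b1).mp h1; omega
          rcases hside2 with hside2 | hside2
          · omega
          · obtain ⟨hwb2, hrow2⟩ := Coff b2 h2.1 h2.2
            have hj2 := (Roff_hi b2 hside2).1
            have hs2 := rowIndex_spec Htl (w b2)
            rw [hrow2] at hs2
            have := partialSum_mono l hj2
            rw [hpsl2] at this
            omega
      · -- b1 outside the middle region
        exfalso
        push_neg at h1
        have hside1 : (b1 : ℕ) < partialSum l k ∨
            partialSum l k + l k + l (k + 1) ≤ (b1 : ℕ) := by
          by_contra hcon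
          push_neg at hcon
          by_cases hsplit : (b1 : ℕ) < partialSum l k + (l k + l (k + 1) - X.card)
          · exact h1.1 ((Rmu_k b1).mpr ⟨by omega, hsplit⟩)
          · exact h1.2 ((Rmu_k1 b1).mpr ⟨by omega, by omega⟩)
        obtain ⟨hwb1, hrow1⟩ := Coff b1 h1.1 h1.2
        rcases hside1 with hside1 | hside1
        · -- b1 in a low row
          have hj1 := Roff_lo b1 hside1
          have hwlow : (w b1 : ℕ) < partialSum l k := by
            have hs1 := rowIndex_spec Htl (w b1)
            rw [hrow1] at hs1
            have := partialSum_mono l (show rowIndex l b1 + 1 ≤ k by omega)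
            omega
          by_cases h2 : rowIndex mu b2 = k ∨ rowIndex mu b2 = k + 1
          · have := CI b2 h2
            omega
          · push_neg at h2
            have hside2 : (b2 : ℕ) < partialSum l k ∨
                partialSum l k + l k + l (k + 1) ≤ (b2 : ℕ) := by
              by_contra hcon
              push_neg at hcon
              by_cases hsplit : (b2 : ℕ) < partialSum l k + (l k + l (k + 1) - X.card)
              · exact h2.1 ((Rmu_k b2).mpr ⟨by omega, hsplit⟩)
              · exact h2.2 ((Rmu_k1 b2).mpr ⟨by omega, by omega⟩)
            obtain ⟨hwb2, hrow2⟩ := Coff b2 h2.1 h2.2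
            rcases hside2 with hside2 | hside2
            · -- both low
              have hj2 := Roff_lo b2 hside2
              have hwlow2 : (w b2 : ℕ) < partialSum l k := by
                have hs2 := rowIndex_spec Htl (w b2)
                rw [hrow2] at hs2
                have := partialSum_mono l (show rowIndex l b2 + 1 ≤ k by omega)
                omega
              have hle12 : rowIndex l b1 ≤ rowIndex l b2 := rowIndex_mono Htl (le_of_lt hb)
              have hle21 : rowIndex l (w b2) ≤ rowIndex l (w b1) :=
                rowIndex_mono Htl (le_of_lt hwb)
              rw [hrow1, hrow2] at hle21
              have hjeq : rowIndex l b1 = rowIndex l b2 := by omega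
              have hnur : rowIndex nu (w b2) = rowIndex nu (w b1) := by
                have ha := (Roff_lo (w b2) (by omega)).2.2
                have hbq := (Roff_lo (w b1) (by omega)).2.2
                rw [ha, hbq, hrow1, hrow2, hjeq]
              have hem := EM _ _ hnur hwb
              rw [hwb1, hwb2, Equiv.Perm.inv_apply_self, Equiv.Perm.inv_apply_self] at hem
              exact absurd hb (not_lt.mpr (le_of_lt hem))
            · -- b2 high: w b2 high, w b1 low
              have hj2 := (Roff_hi b2 hside2).1
              have hs2 := rowIndex_spec Htl (w b2)
              rw [hrow2] at hs2
              have := partialSum_mono l hj2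
              rw [hpsl2] at this
              omega
        · -- b1 high, so b2 high too
          have hside2 : partialSum l k + l k + l (k + 1) ≤ (b2 : ℕ) := by omega
          have h2a : ¬rowIndex mu b2 = k := by
            intro hh; have := (Rmu_k b2).mp hh; omega
          have h2b : ¬rowIndex mu b2 = k + 1 := by
            intro hh; have := (Rmu_k1 b2).mp hh; omega
          obtain ⟨hwb2, hrow2⟩ := Coff b2 h2a h2b
          have hj1 := (Roff_hi b1 hside1).1
          have hj2 := (Roff_hi b2 hside2).1
          have hle12 : rowIndex l b1 ≤ rowIndex l b2 := rowIndex_mono Htl (le_of_lt hb)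
          have hle21 : rowIndex l (w b2) ≤ rowIndex l (w b1) :=
            rowIndex_mono Htl (le_of_lt hwb)
          rw [hrow1, hrow2] at hle21
          have hjeq : rowIndex l b1 = rowIndex l b2 := by omega
          have hwhi1 : partialSum l k + l k + l (k + 1) ≤ (w b1 : ℕ) := by
            have hs1 := rowIndex_spec Htl (w b1)
            rw [hrow1] at hs1
            have := partialSum_mono l hj1
            rw [hpsl2] at this
            omega
          have hwhi2 : partialSum l k + l k + l (k + 1) ≤ (w b2 : ℕ) := by
            have hs2 := rowIndex_spec Htl (w b2)
            rw [hrow2] at hs2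
            have := partialSum_mono l hj2
            rw [hpsl2] at this
            omega
          have hnur : rowIndex nu (w b2) = rowIndex nu (w b1) := by
            have ha := (Roff_hi (w b2) hwhi2).2.2
            have hbq := (Roff_hi (w b1) hwhi1).2.2
            rw [ha, hbq, hrow1, hrow2, hjeq]
          have hem := EM _ _ hnur hwb
          rw [hwb1, hwb2, Equiv.Perm.inv_apply_self, Equiv.Perm.inv_apply_self] at hem
          exact absurd hb (not_lt.mpr (le_of_lt hem))
    · rintro ⟨hz1, hz2, hz12⟩
      have hz1Y := Finset.mem_sdiff.mp hz1
      have hz2Y := Finset.mem_sdiff.mp hz2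
      have hz1X : dX⁻¹ b1 ∈ rowsKK1 l k t \ X :=
        Finset.mem_sdiff.mpr ⟨hYZ hz1Y.1, hz1Y.2⟩
      have hz2X : dX⁻¹ b2 ∈ rowsKK1 l k t \ X :=
        Finset.mem_sdiff.mpr ⟨hz2Y.1, fun h => hz2Y.2 (hXY h)⟩
      have hr1 : rowIndex mu b1 = k := by
        have := HX4 _ hz1X; rwa [Equiv.Perm.apply_inv_self] at this
      have hr2 : rowIndex mu b2 = k := by
        have := HX4 _ hz2X; rwa [Equiv.Perm.apply_inv_self] at this
      refine ⟨(RSX b1 b2 (hr1.trans hr2.symm)).mpr hz12, ?_⟩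
      have h1 := CP b1 hz1
      have h2 := CK b2 hz2
      exact Fin.lt_def.mpr (by omega)
  -- final count
  unfold permLength
  rw [← Finset.card_sigma]
  refine Finset.card_bij (fun p _ => ⟨dX⁻¹ p.1, dX⁻¹ p.2⟩) ?_ ?_ ?_
  · intro p hp
    simp only [Finset.mem_filter, Finset.mem_univ, true_and] at hp
    have h := (Hchar p.1 p.2).mp hp
    simp only [Finset.mem_sigma, Finset.mem_filter]
    exact ⟨h.1, h.2.1, h.2.2⟩
  · intro p1 hp1 p2 hp2 hpe
    simp only [Sigma.mk.inj_iff, heq_eq_eq] at hpe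
    have e1 : p1.1 = p2.1 := dX⁻¹.injective hpe.1
    have e2 : p1.2 = p2.2 := dX⁻¹.injective hpe.2
    exact Prod.ext e1 e2
  · intro q hq
    simp only [Finset.mem_sigma, Finset.mem_filter] at hq
    refine ⟨(dX q.1, dX q.2), ?_, ?_⟩
    · simp only [Finset.mem_filter, Finset.mem_univ, true_and]
      apply (Hchar (dX q.1) (dX q.2)).mpr
      rw [Equiv.Perm.inv_apply_self, Equiv.Perm.inv_apply_self]
      exact ⟨hq.1, hq.2.1, hq.2.2⟩
    · simp only [Equiv.Perm.inv_apply_self]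
end
end

section
/- Let m, n, i be integers with 0 ≤ i ≤ min(m, n-1), let Z be a finite totally ordered set partitioned into a_1 < ... < a_m (row k entries) and b_1 < ... < b_n with a_j < b_j for j ≤ i. Fix Y with {b_{i+2},...,b_n} ⊆ Y ⊆ Z, |Y| = n, Y ∩ {a_1,...,a_i} ≠ ∅, and such that the associated tableau t_Y is lexicographically ≥ t. Then Σ_{X ⊆ {a_1,...,a_i} ∩ Y} (-1)^{|X|} q^{f(X) + L(X∪{b_{i+2},...,b_n}, Y)} = 0 in R, where f(X) = Σ_{j: a_j ∈ X} (m+1-j) and L(X', Y) = Σ_{y ∈ Y∖X'} |{z ∈ Z∖Y : y < z}|. -/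
open Equiv Finset

noncomputable section

open Finset in
theorem lex_of_getElem {α : Type} [LinearOrder α] :
    ∀ (k : ℕ) (L1 L2 : List α) (h1 : k < L1.length) (h2 : k < L2.length),
      (∀ l : ℕ, (hl : l < k) → L1[l]'(hl.trans h1) = L2[l]'(hl.trans h2)) →
      L1[k] < L2[k] → List.Lex (· < ·) L1 L2
  | 0, x::L1, y::L2, _, _, _, hk => List.Lex.rel hk
  | (k+1), x::L1, y::L2, h1, h2, hpre, hk => by
      have h0 : x = y := hpre 0 (Nat.succ_pos k)
      subst h0
      exact List.Lex.cons (lex_of_getElem k L1 L2 (Nat.lt_of_succ_lt_succ h1)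
        (Nat.lt_of_succ_lt_succ h2) (fun l hl => hpre (l+1) (Nat.succ_lt_succ hl)) hk)

theorem statement19 {R : Type} [CommRing R] [IsDomain R] (q : R) (hq : IsUnit q)
    {α : Type} [LinearOrder α] (m n i : ℕ) (him : i ≤ m) (hin : i + 1 ≤ n)
    (a : Fin m → α) (b : Fin n → α) (ha : StrictMono a) (hb : StrictMono b)
    (hdisj : ∀ (j : Fin m) (j' : Fin n), a j ≠ b j')
    (hab : ∀ j : ℕ, j < i → ∀ (hjm : j < m) (hjn : j < n), a ⟨j, hjm⟩ < b ⟨j, hjn⟩)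
    (Y : Finset α)
    (hYb : ∀ j : Fin n, i + 1 ≤ (j : ℕ) → b j ∈ Y)
    (hYZ : Y ⊆ Finset.univ.image a ∪ Finset.univ.image b)
    (hYcard : Y.card = n)
    (hYa : ∃ j : Fin m, (j : ℕ) < i ∧ a j ∈ Y)
    (hlex : ¬ List.Lex (· < ·)
      ((((Finset.univ.image a ∪ Finset.univ.image b : Finset α) \ Y).sort (· ≤ ·))
          ++ Y.sort (· ≤ ·))
      (List.ofFn a ++ List.ofFn b)) :
    ∑ X ∈ ((Finset.univ.filter (fun j : Fin m => (j : ℕ) < i)).image a ∩ Y).powerset,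
      ((-1 : R) ^ X.card *
        q ^ ((∑ j ∈ Finset.univ.filter (fun j : Fin m => a j ∈ X), (m - (j : ℕ))) +
          ∑ y ∈ Y \ (X ∪ (Finset.univ.filter (fun j : Fin n => i + 1 ≤ (j : ℕ))).image b),
            (((Finset.univ.image a ∪ Finset.univ.image b : Finset α) \ Y).filter
              (fun z => y < z)).card)) = 0 := by
  classical
  have hainj := ha.injective
  have hbinj := hb.injective
  set Z : Finset α := Finset.univ.image a ∪ Finset.univ.image b with hZdef
  set B : Finset α := (Finset.univ.filter (fun j : Fin n => i + 1 ≤ (j : ℕ))).image b with hBdef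
  set S : Finset α := (Finset.univ.filter (fun j : Fin m => (j : ℕ) < i)).image a ∩ Y with hSdef
  -- cardinalities
  have hZcard : Z.card = m + n := by
    rw [hZdef, Finset.card_union_of_disjoint, Finset.card_image_of_injective _ hainj,
      Finset.card_image_of_injective _ hbinj, Finset.card_univ, Finset.card_univ,
      Fintype.card_fin, Fintype.card_fin]
    refine Finset.disjoint_left.2 ?_
    rintro x hx1 hx2
    obtain ⟨j, -, rfl⟩ := Finset.mem_image.1 hx1
    obtain ⟨j', -, hj'⟩ := Finset.mem_image.1 hx2
    exact hdisj j j' hj'.symm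
  have hCcard : (Z \ Y).card = m := by
    rw [Finset.card_sdiff_of_subset hYZ, hZcard, hYcard]; omega
  -- minimal index j0 with a j0 ∈ Y
  obtain ⟨jw, hjwi, hjwY⟩ := hYa
  have hJne : (Finset.univ.filter (fun j : Fin m => a j ∈ Y)).Nonempty :=
    ⟨jw, by simp [hjwY]⟩
  set j0 : Fin m := (Finset.univ.filter (fun j : Fin m => a j ∈ Y)).min' hJne with hj0def
  have hj0Y : a j0 ∈ Y := by
    have := Finset.min'_mem _ hJne
    rw [← hj0def] at this
    exact (Finset.mem_filter.1 this).2
  have hj0i : (j0 : ℕ) < i := by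
    have h := Finset.min'_le _ jw
      (show jw ∈ Finset.univ.filter (fun j : Fin m => a j ∈ Y) from
        Finset.mem_filter.2 ⟨Finset.mem_univ _, hjwY⟩)
    rw [← hj0def] at h
    exact lt_of_le_of_lt h hjwi
  have hj0min : ∀ k : Fin m, k < j0 → a k ∉ Y := by
    intro k hk hkY
    exact absurd (Finset.min'_le _ k
        (show k ∈ Finset.univ.filter (fun j : Fin m => a j ∈ Y) from
          Finset.mem_filter.2 ⟨Finset.mem_univ _, hkY⟩))
      (by rw [← hj0def]; exact not_le.2 hk)
  have haC : ∀ k : Fin m, k < j0 → a k ∈ Z \ Y := by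
    intro k hk
    exact Finset.mem_sdiff.2 ⟨Finset.mem_union_left _ (Finset.mem_image_of_mem a (mem_univ k)),
      hj0min k hk⟩
  -- sorted list of Z \ Y
  set C : List α := (Z \ Y).sort (· ≤ ·) with hCdef
  have hClen : C.length = m := by rw [hCdef, Finset.length_sort, hCcard]
  have hCsorted : C.SortedLT := Finset.sortedLT_sort _
  have hCmem : ∀ x, x ∈ C ↔ x ∈ Z \ Y := fun x => Finset.mem_sort _
  have hA : ∀ (k : ℕ) (hk : k < m),
      (List.ofFn a ++ List.ofFn b)[k]'(by simp; omega) = a ⟨k, hk⟩ := by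
    intro k hk
    rw [List.getElem_append_left (by simpa using hk), List.getElem_ofFn]
  have hC1 : ∀ (k : ℕ) (hk : k < m),
      (C ++ Y.sort (· ≤ ·))[k]'(by simp [hClen]; omega) = C[k]'(by omega) := by
    intro k hk
    rw [List.getElem_append_left (by omega)]
  -- key lex consequence
  have hge : ∀ (k : ℕ) (hkm : k < m),
      (∀ l : ℕ, (hl : l < k) → C[l]'(by omega) = a ⟨l, hl.trans hkm⟩) →
      a ⟨k, hkm⟩ ≤ C[k]'(by omega) := by
    intro k hkm hprefix
    by_contra hlt
    push_neg at hlt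
    refine hlex ?_
    refine lex_of_getElem k _ _ (by simp [hClen]; omega) (by simp; omega) ?_ ?_
    · intro l hl
      rw [hC1 l (hl.trans hkm), hA l (hl.trans hkm), hprefix l hl]
    · rw [hC1 k hkm, hA k hkm]
      exact hlt
  have hpre : ∀ k : ℕ, (hkj : k < (j0 : ℕ)) → C[k]'(by omega) = a ⟨k, hkj.trans j0.isLt⟩ := by
    intro k
    induction k using Nat.strong_induction_on with
    | _ k IH =>
      intro hkj
      have hkm : k < m := hkj.trans j0.isLt
      refine le_antisymm ?_ (hge k hkm (fun l hl => IH l hl (hl.trans hkj)))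
      have hmemC : a ⟨k, hkm⟩ ∈ C := (hCmem _).2 (haC ⟨k, hkm⟩ hkj)
      obtain ⟨p, hp⟩ := List.mem_iff_get.1 hmemC
      rcases lt_or_ge (p : ℕ) k with hpk | hpk
      · exfalso
        have h1 : C[(p : ℕ)]'(p.isLt) = a ⟨p, (hpk.trans hkj).trans j0.isLt⟩ :=
          IH p hpk (hpk.trans hkj)
        rw [List.get_eq_getElem] at hp
        rw [hp] at h1
        have := hainj h1
        have : (k : ℕ) = (p : ℕ) := congrArg Fin.val this
        omega
      · have hmono := hCsorted.strictMono_get.monotone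
          (show (⟨k, by omega⟩ : Fin C.length) ≤ p from hpk)
        rw [hp] at hmono
        simpa using hmono
  have hCj0 : a j0 < C[(j0 : ℕ)]'(by omega) := by
    have h1 : a j0 ≤ C[(j0 : ℕ)]'(by omega) := by
      have := hge j0 j0.isLt (fun l hl => hpre l hl)
      simpa using this
    refine lt_of_le_of_ne h1 (fun he => ?_)
    have hm : C[(j0 : ℕ)]'(by omega) ∈ Z \ Y := (hCmem _).1 (List.getElem_mem _)
    rw [← he] at hm
    exact (Finset.mem_sdiff.1 hm).2 hj0Y
  -- elements of Z \ Y below a j0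
  have hD : (Z \ Y).filter (fun z => z < a j0)
      = (Finset.univ.filter (fun l : Fin m => l < j0)).image a := by
    ext z
    simp only [Finset.mem_filter, Finset.mem_image, Finset.mem_univ, true_and]
    constructor
    · rintro ⟨hzZY, hzlt⟩
      have hzC := (hCmem z).2 hzZY
      obtain ⟨p, hp⟩ := List.mem_iff_get.1 hzC
      have hpj0 : (p : ℕ) < (j0 : ℕ) := by
        by_contra hge'
        push_neg at hge'
        have hmono := hCsorted.strictMono_get.monotone
          (show (⟨(j0 : ℕ), by omega⟩ : Fin C.length) ≤ p from hge')
        rw [hp] at hmono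
        simp only [List.get_eq_getElem] at hmono
        exact absurd (lt_of_lt_of_le hCj0 hmono) (not_lt.2 hzlt.le)
      refine ⟨⟨p, by omega⟩, hpj0, ?_⟩
      rw [← hp, List.get_eq_getElem, hpre p hpj0]
    · rintro ⟨l, hl, rfl⟩
      exact ⟨haC l hl, ha hl⟩
  have hDcard : ((Z \ Y).filter (fun z => z < a j0)).card = (j0 : ℕ) := by
    rw [hD, Finset.card_image_of_injective _ hainj,
      show Finset.univ.filter (fun l : Fin m => l < j0) = Finset.Iio j0 by ext; simp,
      Fin.card_Iio]
  have hGcard : ((Z \ Y).filter (fun z => a j0 < z)).card = m - (j0 : ℕ) := by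
    have hsplit := Finset.card_filter_add_card_filter_not
      (s := Z \ Y) (p := fun z => z < a j0)
    have heq : (Z \ Y).filter (fun z => ¬ z < a j0) = (Z \ Y).filter (fun z => a j0 < z) := by
      refine Finset.filter_congr (fun z hz => ?_)
      have hne : z ≠ a j0 := fun h => (Finset.mem_sdiff.1 hz).2 (h ▸ hj0Y)
      simp only [not_lt, eq_iff_iff]
      exact ⟨fun h => lt_of_le_of_ne h (Ne.symm hne), le_of_lt⟩
    rw [heq, hDcard, hCcard] at hsplit
    omega
  -- the pairing
  set s : α := a j0 with hsdef
  have hsS : s ∈ S := by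
    rw [hSdef]
    exact Finset.mem_inter.2 ⟨Finset.mem_image.2 ⟨j0, by simp [hj0i], rfl⟩, hj0Y⟩
  rw [show S = insert s (S.erase s) from (Finset.insert_erase hsS).symm,
    Finset.sum_powerset_insert (Finset.notMem_erase _ _), ← Finset.sum_add_distrib]
  refine Finset.sum_eq_zero (fun X hX => ?_)
  have hXS : X ⊆ S.erase s := Finset.mem_powerset.1 hX
  have hsX : s ∉ X := fun h => (Finset.notMem_erase s S) (hXS h)
  have hsB : s ∉ B := by
    rw [hBdef]
    intro h
    obtain ⟨j', -, hj'⟩ := Finset.mem_image.1 h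
    exact hdisj j0 j' hj'.symm
  -- F part
  have hF : Finset.univ.filter (fun j : Fin m => a j ∈ insert s X)
      = insert j0 (Finset.univ.filter (fun j : Fin m => a j ∈ X)) := by
    ext j
    simp only [Finset.mem_filter, Finset.mem_univ, true_and, Finset.mem_insert]
    constructor
    · rintro (h | h)
      · exact Or.inl (hainj h)
      · exact Or.inr h
    · rintro (rfl | h)
      · exact Or.inl rfl
      · exact Or.inr h
  have hj0notin : j0 ∉ Finset.univ.filter (fun j : Fin m => a j ∈ X) := by
    simp only [Finset.mem_filter, Finset.mem_univ, true_and]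
    exact hsX
  have hFsum : ∑ j ∈ Finset.univ.filter (fun j : Fin m => a j ∈ insert s X), (m - (j : ℕ))
      = (m - (j0 : ℕ)) + ∑ j ∈ Finset.univ.filter (fun j : Fin m => a j ∈ X), (m - (j : ℕ)) := by
    rw [hF, Finset.sum_insert hj0notin]
  -- L part
  have hsYXB : s ∈ Y \ (X ∪ B) := by
    refine Finset.mem_sdiff.2 ⟨hj0Y, ?_⟩
    rw [Finset.mem_union]
    rintro (h | h)
    · exact hsX h
    · exact hsB h
  have hYdiff : Y \ (insert s X ∪ B) = (Y \ (X ∪ B)).erase s := by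
    rw [Finset.insert_union, Finset.sdiff_insert]
  have hLsum : ∑ y ∈ Y \ (X ∪ B), ((Z \ Y).filter (fun z => y < z)).card
      = (m - (j0 : ℕ)) +
        ∑ y ∈ Y \ (insert s X ∪ B), ((Z \ Y).filter (fun z => y < z)).card := by
    rw [hYdiff, ← Finset.add_sum_erase _ _ hsYXB, hGcard]
  -- combine
  have hcard : (insert s X).card = X.card + 1 := Finset.card_insert_of_notMem hsX
  rw [hcard, hFsum, hLsum]
  generalize (∑ j ∈ Finset.univ.filter (fun j : Fin m => a j ∈ X), (m - (j : ℕ))) = F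
  generalize (∑ y ∈ Y \ (insert s X ∪ B), ((Z \ Y).filter (fun z => y < z)).card) = L'
  have hexp : m - (j0 : ℕ) + F + L' = F + (m - (j0 : ℕ) + L') := by omega
  rw [hexp, pow_succ]
  ring
end
end
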